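/- Let G be a graph, let k ≥ 2 and d be natural numbers, and let r = (r_1, …, r_k) be a vector of natural numbers with r_1 + ⋯ + r_k ≥ max{Δ(G) + 1 − k, d}. Let P = (V_1, …, V_k) be an r-partition of G, and suppose x ∈ V_i satisfies d_{V_i}(x) ≥ r_i. Then d_G(x) ≥ d; moreover, if d_G(x) = d, then for every j ≠ i one has d_{V_j}(x) ≤ r_j, so that moving x from V_i to any V_j yields an ordered partition P* with f(P*) ≤ f(P). -/

import Mathlib

open SimpleGraph

/-- `(V_1, …, V_k)` is an ordered partition: pairwise disjoint sets covering the vertices. -/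
def IsOrderedPartition {V : Type*} {k : ℕ} (P : Fin k → Finset V) : Prop :=
  (∀ i j, i ≠ j → Disjoint (P i) (P j)) ∧ ∀ v, ∃ i, v ∈ P i

/-- `f(P) = Σ_i (|E(G[V_i])| - r_i * |V_i|)`. -/
noncomputable def partitionWeight {V : Type*} [Fintype V] (G : SimpleGraph V) {k : ℕ}
    (r : Fin k → ℕ) (P : Fin k → Finset V) : ℤ :=
  ∑ i, ((Nat.card (G.induce (P i : Set V)).edgeSet : ℤ) - (r i : ℤ) * (P i).card)

/-- An `r`-partition: an ordered partition minimizing `f`. -/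
def IsRPartition {V : Type*} [Fintype V] (G : SimpleGraph V) {k : ℕ}
    (r : Fin k → ℕ) (P : Fin k → Finset V) : Prop :=
  IsOrderedPartition P ∧
    ∀ Q : Fin k → Finset V, IsOrderedPartition Q →
      partitionWeight G r P ≤ partitionWeight G r Q

/-- The partition obtained from `P` by moving the vertex `x` from part `i` to part `j`. -/
def movePartition {V : Type*} [DecidableEq V] {k : ℕ} (P : Fin k → Finset V)
    (i j : Fin k) (x : V) : Fin k → Finset V :=
  fun l => if l = i then (P l).erase x else if l = j then insert x (P l) else P l

/-!
Moving `x` from `V_i` to `V_j` changes `f` by `(d_{V_j}(x) - r_j) - (d_{V_i}(x) - r_i)`. Minimality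
of `P` and `d_{V_i}(x) ≥ r_i` therefore force `d_{V_j}(x) ≥ r_j` for every `j`, so that
`d_G(x) = Σ_j d_{V_j}(x) ≥ Σ_j r_j ≥ d`. If `d_G(x) = d`, all these inequalities are equalities.
-/

open Finset

namespace SimpleGraph

variable {V : Type*} (G : SimpleGraph V) [DecidableRel G.Adj]

lemma degree_induce_eq_card_filter (s : Finset V) (a : (s : Set V)) :
    (G.induce (s : Set V)).degree a = #{w ∈ s | G.Adj a w} := by
  rw [degree, neighborFinset_eq_filter]
  refine card_bij (fun b _ => (b : V)) ?_ (fun b _ c _ h => Subtype.ext h) ?_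
  · intro b hb
    simp only [mem_filter, mem_univ, true_and, comap_adj, Function.Embedding.subtype_apply] at hb
    exact mem_filter.mpr ⟨b.2, hb⟩
  · intro w hw
    obtain ⟨hws, hadj⟩ := mem_filter.mp hw
    exact ⟨⟨w, hws⟩, by simpa using hadj, rfl⟩

lemma two_mul_card_edgeSet_induce (s : Finset V) :
    2 * Nat.card (G.induce (s : Set V)).edgeSet = ∑ v ∈ s, #{w ∈ s | G.Adj v w} := by
  rw [Nat.card_eq_fintype_card, ← Set.toFinset_card, ← edgeFinset,
    ← sum_degrees_eq_twice_card_edges, ← sum_coe_sort s]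
  exact sum_congr rfl fun a _ => G.degree_induce_eq_card_filter s a

variable [DecidableEq V]

lemma card_edgeSet_induce_insert {s : Finset V} {x : V} (hx : x ∉ s) :
    Nat.card (G.induce (insert x s : Finset V)).edgeSet
      = Nat.card (G.induce (s : Set V)).edgeSet + #{w ∈ s | G.Adj x w} := by
  have hx_nbrs : #{w ∈ insert x s | G.Adj x w} = #{w ∈ s | G.Adj x w} := by
    rw [filter_insert, if_neg (G.loopless.irrefl x)]
  have hv_nbrs : ∀ v ∈ s, #{w ∈ insert x s | G.Adj v w}
      = #{w ∈ s | G.Adj v w} + if G.Adj x v then 1 else 0 := by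
    intro v _
    rw [filter_insert]
    by_cases hvx : G.Adj v x
    · rw [if_pos hvx, if_pos hvx.symm]
      exact card_insert_of_notMem fun h => hx (mem_of_mem_filter x h)
    · rw [if_neg hvx, if_neg fun h => hvx h.symm, add_zero]
  have h := G.two_mul_card_edgeSet_induce (insert x s)
  rw [sum_insert hx, hx_nbrs, sum_congr rfl hv_nbrs, sum_add_distrib, sum_boole, Nat.cast_id,
    ← G.two_mul_card_edgeSet_induce s] at h
  omega

lemma card_edgeSet_induce_erase_add {s : Finset V} {x : V} (hx : x ∈ s) :
    Nat.card (G.induce (s.erase x : Finset V)).edgeSet + #{w ∈ s | G.Adj x w}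
      = Nat.card (G.induce (s : Set V)).edgeSet := by
  have h := G.card_edgeSet_induce_insert (notMem_erase x s)
  have hx_nbr : x ∉ ({w ∈ s | G.Adj x w} : Finset V) := fun h =>
    G.loopless.irrefl x (mem_filter.mp h).2
  rwa [insert_erase hx, filter_erase, erase_eq_of_notMem hx_nbr, eq_comm] at h

lemma degree_eq_sum_card_filter_adj [Fintype V] {k : ℕ} {P : Fin k → Finset V}
    (hP : IsOrderedPartition P) (x : V) :
    G.degree x = ∑ l, #{w ∈ P l | G.Adj x w} := by
  have hU : ({w | G.Adj x w} : Finset V) = univ.biUnion fun l => {w ∈ P l | G.Adj x w} := by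
    ext v
    simp only [mem_filter, mem_univ, true_and, mem_biUnion]
    exact ⟨fun hv => (hP.2 v).imp fun l hl => ⟨hl, hv⟩, fun ⟨_, _, hv⟩ => hv⟩
  rw [degree, neighborFinset_eq_filter, hU, card_biUnion]
  exact fun l _ m _ hlm => (hP.1 l m hlm).mono (filter_subset _ _) (filter_subset _ _)

end SimpleGraph

section MovePartition

variable {V : Type*} [DecidableEq V] {k : ℕ} {P : Fin k → Finset V} {i j : Fin k} {x : V}

@[simp]
lemma movePartition_self : movePartition P i j x i = (P i).erase x := if_pos rfl

lemma movePartition_of_ne (hji : j ≠ i) : movePartition P i j x j = insert x (P j) := by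
  simp [movePartition, hji]

lemma movePartition_of_ne_of_ne {l : Fin k} (hli : l ≠ i) (hlj : l ≠ j) :
    movePartition P i j x l = P l := by
  simp [movePartition, hli, hlj]

lemma mem_movePartition_self_iff (hP : IsOrderedPartition P) (hji : j ≠ i) (hx : x ∈ P i)
    (l : Fin k) : x ∈ movePartition P i j x l ↔ l = j := by
  by_cases hli : l = i
  · subst hli
    simp [Ne.symm hji]
  by_cases hlj : l = j
  · subst hlj
    simp [movePartition_of_ne hli]
  rw [movePartition_of_ne_of_ne hli hlj, iff_false_intro hlj, iff_false]
  exact disjoint_left.mp (hP.1 i l (Ne.symm hli)) hx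

lemma mem_movePartition_iff_of_ne {v : V} (hv : v ≠ x) (l : Fin k) :
    v ∈ movePartition P i j x l ↔ v ∈ P l := by
  unfold movePartition
  split_ifs <;> simp [hv]

lemma IsOrderedPartition.movePartition (hP : IsOrderedPartition P) (hji : j ≠ i)
    (hx : x ∈ P i) : IsOrderedPartition (movePartition P i j x) := by
  refine ⟨fun l m hlm => disjoint_left.mpr fun v hvl hvm => ?_, fun v => ?_⟩
  · by_cases hv : v = x
    · subst hv
      rw [mem_movePartition_self_iff hP hji hx] at hvl hvm
      exact hlm (hvl.trans hvm.symm)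
    · rw [mem_movePartition_iff_of_ne hv] at hvl hvm
      exact disjoint_left.mp (hP.1 l m hlm) hvl hvm
  · by_cases hv : v = x
    · exact ⟨j, hv ▸ (mem_movePartition_self_iff hP hji hx j).mpr rfl⟩
    · exact (hP.2 v).imp fun l => (mem_movePartition_iff_of_ne hv l).mpr

end MovePartition

section PartitionWeight

variable {V : Type*} [Fintype V] [DecidableEq V] (G : SimpleGraph V) [DecidableRel G.Adj]
  {k : ℕ} (r : Fin k → ℕ) {P : Fin k → Finset V} {i j : Fin k} {x : V}

lemma partitionWeight_movePartition (hP : IsOrderedPartition P) (hji : j ≠ i) (hx : x ∈ P i) :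
    partitionWeight G r (movePartition P i j x) + (#{w ∈ P i | G.Adj x w} - r i)
      = partitionWeight G r P + (#{w ∈ P j | G.Adj x w} - r j) := by
  have hxj : x ∉ P j := fun h => disjoint_left.mp (hP.1 j i hji) h hx
  have hdiff : partitionWeight G r (movePartition P i j x) - partitionWeight G r P
      = ((Nat.card (G.induce ((P i).erase x : Set V)).edgeSet - r i * #((P i).erase x))
          - (Nat.card (G.induce (P i : Set V)).edgeSet - r i * #(P i)))
        + ((Nat.card (G.induce ((insert x (P j) : Finset V) : Set V)).edgeSet
            - r j * #(insert x (P j)))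
          - (Nat.card (G.induce (P j : Set V)).edgeSet - r j * #(P j))) := by
    rw [partitionWeight, partitionWeight, ← sum_sub_distrib,
      Fintype.sum_eq_add i j (Ne.symm hji) fun l ⟨hli, hlj⟩ => by
        rw [movePartition_of_ne_of_ne hli hlj, sub_self],
      movePartition_self, movePartition_of_ne hji]
  rw [← G.card_edgeSet_induce_erase_add hx, G.card_edgeSet_induce_insert hxj,
    ← card_erase_add_one hx, card_insert_of_notMem hxj] at hdiff
  push_cast at hdiff
  linarith

variable {G r}

lemma IsRPartition.card_filter_adj_sub_le (hP : IsRPartition G r P) (hji : j ≠ i)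
    (hx : x ∈ P i) :
    (#{w ∈ P i | G.Adj x w} : ℤ) - r i ≤ #{w ∈ P j | G.Adj x w} - r j := by
  have hmin := hP.2 _ (hP.1.movePartition hji hx)
  linarith [partitionWeight_movePartition G r hP.1 hji hx]

lemma IsRPartition.le_card_filter_adj (hP : IsRPartition G r P) (hx : x ∈ P i)
    (hdeg : r i ≤ #{w ∈ P i | G.Adj x w}) (l : Fin k) : r l ≤ #{w ∈ P l | G.Adj x w} := by
  rcases eq_or_ne l i with rfl | hli
  · exact hdeg
  · have := hP.card_filter_adj_sub_le hli hx
    omega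

end PartitionWeight

theorem stmt_7_general {V : Type*} [Fintype V] [DecidableEq V] (G : SimpleGraph V) [DecidableRel G.Adj]
    (k d : ℕ) (r : Fin k → ℕ)
    (hr2 : (∑ i, r i) ≥ d)
    (P : Fin k → Finset V) (hP : IsRPartition G r P)
    (i : Fin k) (x : V) (hx : x ∈ P i)
    (hdeg : ((P i).filter (fun w => G.Adj x w)).card ≥ r i) :
    d ≤ G.degree x ∧
      (G.degree x = d → ∀ j : Fin k, j ≠ i →
        ((P j).filter (fun w => G.Adj x w)).card ≤ r j ∧
        IsOrderedPartition (movePartition P i j x) ∧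
        partitionWeight G r (movePartition P i j x) ≤ partitionWeight G r P) := by
  have hle := hP.le_card_filter_adj hx hdeg
  have hdegree := G.degree_eq_sum_card_filter_adj hP.1 x
  have hsum_le : ∑ l, r l ≤ G.degree x := hdegree ▸ sum_le_sum fun l _ => hle l
  refine ⟨hr2.trans hsum_le, fun hdx j hji => ?_⟩
  have heq : ∀ l, #{w ∈ P l | G.Adj x w} = r l := by
    have hsum_eq : ∑ l, r l = ∑ l, #{w ∈ P l | G.Adj x w} := by omega
    exact fun l => ((sum_eq_sum_iff_of_le fun l _ => hle l).mp hsum_eq l (mem_univ l)).symm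
  refine ⟨(heq j).le, hP.1.movePartition hji hx, ?_⟩
  have hmove := partitionWeight_movePartition G r hP.1 hji hx
  rw [heq i, heq j] at hmove
  linarith

theorem stmt_7 {V : Type*} [Fintype V] [DecidableEq V] (G : SimpleGraph V) [DecidableRel G.Adj]
    (k d : ℕ) (hk : 2 ≤ k) (r : Fin k → ℕ)
    (hr1 : (∑ i, r i) + k ≥ G.maxDegree + 1) (hr2 : (∑ i, r i) ≥ d)
    (P : Fin k → Finset V) (hP : IsRPartition G r P)
    (i : Fin k) (x : V) (hx : x ∈ P i)
    (hdeg : ((P i).filter (fun w => G.Adj x w)).card ≥ r i) :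
    d ≤ G.degree x ∧
      (G.degree x = d → ∀ j : Fin k, j ≠ i →
        ((P j).filter (fun w => G.Adj x w)).card ≤ r j ∧
        IsOrderedPartition (movePartition P i j x) ∧
        partitionWeight G r (movePartition P i j x) ≤ partitionWeight G r P) :=
  stmt_7_general G k d r hr2 P hP i x hx hdeg
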